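/- Let a, b ∈ ℤ² have coprime coordinates and satisfy det(a, b) > 0. Suppose c₀, …, c_{n+1} and c′₀, …, c′_{n′+1} are two finite sequences of elements of ℤ² such that c₀ = c′₀ = a, c_{n+1} = b, c′_{n′+1} = b, det(c_j, c_{j+1}) = 1 for all 0 ≤ j ≤ n and det(c′_j, c′_{j+1}) = 1 for all 0 ≤ j ≤ n′, and det(c_{k−1}, c_{k+1}) > 1 for all 1 ≤ k ≤ n and det(c′_{k−1}, c′_{k+1}) > 1 for all 1 ≤ k ≤ n′. Then n = n′ and c_j = c′_j for all 0 ≤ j ≤ n+1. -/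

import Mathlib

/-!
Along such a chain the integers `e j := det(c j, b)` satisfy `e (n+1) = 0`, `e n = 1` and, since
`c (j-1) + c (j+1) = det(c (j-1), c (j+1)) • c j` with coefficient at least `2`, they strictly
decrease. Hence `n = 0` exactly when `det(a, b) = 1`, and otherwise `c 1` is a solution of
`det(a, x) = 1` with `0 < det(x, b) < det(a, b)`. As `a` is primitive, the solutions of `det(a, x) = 1`
form one class `x₀ + ℤ a`, along which `det(x, b)` moves by multiples of `det(a, b)`; so `c 1` is
unique, and induction on the length of the chain starting at `c 1` finishes the proof.
-/

/-- The 2×2 determinant of two vectors in `ℤ × ℤ`. -/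
def det2 (u v : ℤ × ℤ) : ℤ := u.1 * v.2 - u.2 * v.1

section Det2

variable {a b x y z : ℤ × ℤ}

theorem det2_self (x : ℤ × ℤ) : det2 x x = 0 := by
  unfold det2; ring

theorem add_eq_det2_smul (hxy : det2 x y = 1) (hyz : det2 y z = 1) :
    x + z = det2 x z • y := by
  unfold det2 at *
  ext
  · simp only [Prod.fst_add, Prod.smul_fst, smul_eq_mul]
    linear_combination (-z.1) * hxy + (-x.1) * hyz
  · simp only [Prod.snd_add, Prod.smul_snd, smul_eq_mul]
    linear_combination (-z.2) * hxy + (-x.2) * hyz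

theorem det2_add_left (x y z : ℤ × ℤ) : det2 (x + y) z = det2 x z + det2 y z := by
  unfold det2; simp only [Prod.fst_add, Prod.snd_add]; ring

theorem det2_smul_left (k : ℤ) (x z : ℤ × ℤ) : det2 (k • x) z = k * det2 x z := by
  unfold det2; simp only [Prod.smul_fst, Prod.smul_snd, smul_eq_mul]; ring

/-- Cramer's rule in the basis `a, x` of `ℤ²`. -/
theorem det2_smul_eq_add (hax : det2 a x = 1) (b : ℤ × ℤ) :
    det2 a b • x = b + det2 x b • a := by
  unfold det2 at *
  ext
  · simp only [Prod.fst_add, Prod.smul_fst, smul_eq_mul]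
    linear_combination b.1 * hax
  · simp only [Prod.snd_add, Prod.smul_snd, smul_eq_mul]
    linear_combination b.2 * hax

theorem isCoprime_of_det2_eq_one (hax : det2 a x = 1) : IsCoprime x.1 x.2 :=
  ⟨-a.2, a.1, by unfold det2 at hax; linear_combination hax⟩

theorem dvd_det2_sub_det2 (ha : IsCoprime a.1 a.2) (hax : det2 a x = 1) (hay : det2 a y = 1)
    (b : ℤ × ℤ) : det2 a b ∣ det2 x b - det2 y b := by
  have hx := det2_smul_eq_add hax b
  have hy := det2_smul_eq_add hay b
  obtain ⟨u, v, huv⟩ := ha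
  refine ⟨u * (x.1 - y.1) + v * (x.2 - y.2), ?_⟩
  have h1 := congrArg Prod.fst hx
  have h2 := congrArg Prod.snd hx
  have h1' := congrArg Prod.fst hy
  have h2' := congrArg Prod.snd hy
  simp only [Prod.fst_add, Prod.snd_add, Prod.smul_fst, Prod.smul_snd, smul_eq_mul] at h1 h2 h1' h2'
  linear_combination -(det2 x b - det2 y b) * huv - u * (h1 - h1') - v * (h2 - h2')

theorem eq_of_det2_eq_one_of_det2_mem_Ico (ha : IsCoprime a.1 a.2)
    (hax : det2 a x = 1) (hay : det2 a y = 1)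
    (hx : det2 x b ∈ Set.Ico 0 (det2 a b)) (hy : det2 y b ∈ Set.Ico 0 (det2 a b)) : x = y := by
  have hD : det2 a b ≠ 0 := by grind
  have he : det2 x b = det2 y b := by
    have h := Int.eq_zero_of_abs_lt_dvd (dvd_det2_sub_det2 ha hax hay b)
      (abs_sub_lt_iff.2 ⟨by grind, by grind⟩)
    omega
  apply smul_right_injective (ℤ × ℤ) hD
  simp only [det2_smul_eq_add hax, det2_smul_eq_add hay, he]

end Det2

structure IsUnimodularChain (a b : ℤ × ℤ) (n : ℕ) (c : ℕ → ℤ × ℤ) : Prop where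
  zero : c 0 = a
  last : c (n + 1) = b
  det2_succ : ∀ j ≤ n, det2 (c j) (c (j + 1)) = 1
  one_lt_det2 : ∀ j, j + 1 ≤ n → 1 < det2 (c j) (c (j + 2))

namespace IsUnimodularChain

variable {a b : ℤ × ℤ} {n : ℕ} {c : ℕ → ℤ × ℤ}

theorem tail (hc : IsUnimodularChain a b (n + 1) c) :
    IsUnimodularChain (c 1) b n (fun j => c (j + 1)) where
  zero := rfl
  last := hc.last
  det2_succ j hj := hc.det2_succ (j + 1) (by omega)
  one_lt_det2 j hj := hc.one_lt_det2 (j + 1) (by omega)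

theorem det2_nonneg_and_lt (hc : IsUnimodularChain a b n c) {j : ℕ} (hj : j ≤ n) :
    0 ≤ det2 (c (j + 1)) b ∧ det2 (c (j + 1)) b < det2 (c j) b := by
  induction hj using Nat.decreasingInduction with
  | self =>
    have h := hc.det2_succ n le_rfl
    rw [hc.last] at h ⊢
    simp [det2_self, h]
  | of_succ j hj ih =>
    obtain ⟨hnonneg, hlt⟩ := ih
    have hrec : det2 (c j) b + det2 (c (j + 2)) b = det2 (c j) (c (j + 2)) * det2 (c (j + 1)) b := by
      rw [← det2_add_left, ← det2_smul_left,
        add_eq_det2_smul (hc.det2_succ j (by omega)) (hc.det2_succ (j + 1) (by omega))]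
    have hcoef := hc.one_lt_det2 j (by omega)
    refine ⟨by omega, ?_⟩
    nlinarith

theorem det2_second_mem_Ioo (hc : IsUnimodularChain a b (n + 1) c) :
    det2 (c 1) b ∈ Set.Ioo 0 (det2 a b) := by
  have h1 := hc.det2_nonneg_and_lt (j := 0) (by omega)
  have h2 := hc.det2_nonneg_and_lt (j := 1) (by omega)
  rw [hc.zero] at h1
  exact ⟨by omega, h1.2⟩

theorem det2_eq_one (hc : IsUnimodularChain a b 0 c) : det2 a b = 1 := by
  simpa [hc.zero, hc.last] using hc.det2_succ 0 le_rfl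

theorem second_eq (ha : IsCoprime a.1 a.2) {n' : ℕ} {c' : ℕ → ℤ × ℤ}
    (hc : IsUnimodularChain a b (n + 1) c) (hc' : IsUnimodularChain a b (n' + 1) c') :
    c 1 = c' 1 := by
  have hac := hc.det2_succ 0 (by omega)
  have hac' := hc'.det2_succ 0 (by omega)
  rw [hc.zero] at hac
  rw [hc'.zero] at hac'
  exact eq_of_det2_eq_one_of_det2_mem_Ico ha hac hac'
    (Set.Ioo_subset_Ico_self hc.det2_second_mem_Ioo)
    (Set.Ioo_subset_Ico_self hc'.det2_second_mem_Ioo)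

theorem unique (ha : IsCoprime a.1 a.2) {n' : ℕ} {c' : ℕ → ℤ × ℤ}
    (hc : IsUnimodularChain a b n c) (hc' : IsUnimodularChain a b n' c') :
    n = n' ∧ ∀ j ≤ n + 1, c j = c' j := by
  induction n generalizing a n' c c' with
  | zero =>
    cases n' with
    | zero =>
      refine ⟨rfl, fun j hj => ?_⟩
      interval_cases j
      · rw [hc.zero, hc'.zero]
      · rw [hc.last, hc'.last]
    | succ m' => grind [hc.det2_eq_one, hc'.det2_second_mem_Ioo]
  | succ m ih =>
    cases n' with
    | zero => grind [hc'.det2_eq_one, hc.det2_second_mem_Ioo]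
    | succ m' =>
      have h1 := hc.second_eq ha hc'
      have htail' := hc'.tail
      rw [← h1] at htail'
      obtain ⟨rfl, htail⟩ := ih (isCoprime_of_det2_eq_one (hc.zero ▸ hc.det2_succ 0 (by omega)))
        hc.tail htail'
      refine ⟨rfl, fun j hj => ?_⟩
      cases j with
      | zero => rw [hc.zero, hc'.zero]
      | succ j => exact htail j (by omega)

end IsUnimodularChain

theorem chain_unique_general (a b : ℤ × ℤ)
    (ha : Int.gcd a.1 a.2 = 1)
    (n n' : ℕ) (c c' : ℕ → ℤ × ℤ)
    (hc0 : c 0 = a) (hc0' : c' 0 = a)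
    (hcl : c (n + 1) = b) (hcl' : c' (n' + 1) = b)
    (h1 : ∀ j, j ≤ n → det2 (c j) (c (j + 1)) = 1)
    (h1' : ∀ j, j ≤ n' → det2 (c' j) (c' (j + 1)) = 1)
    (h2 : ∀ k, 1 ≤ k → k ≤ n → 1 < det2 (c (k - 1)) (c (k + 1)))
    (h2' : ∀ k, 1 ≤ k → k ≤ n' → 1 < det2 (c' (k - 1)) (c' (k + 1))) :
    n = n' ∧ ∀ j, j ≤ n + 1 → c j = c' j :=
  IsUnimodularChain.unique (Int.isCoprime_iff_gcd_eq_one.2 ha)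
    ⟨hc0, hcl, h1, fun j hj => by simpa using h2 (j + 1) (by omega) hj⟩
    ⟨hc0', hcl', h1', fun j hj => by simpa using h2' (j + 1) (by omega) hj⟩

/-- Uniqueness part of the arithmetic sub-lemma: two sequences from `a` to `b`
with consecutive determinants `1` and `det(c_{k-1}, c_{k+1}) > 1` coincide. -/
theorem chain_unique (a b : ℤ × ℤ)
    (ha : Int.gcd a.1 a.2 = 1) (hb : Int.gcd b.1 b.2 = 1)
    (hab : 0 < det2 a b)
    (n n' : ℕ) (c c' : ℕ → ℤ × ℤ)
    (hc0 : c 0 = a) (hc0' : c' 0 = a)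
    (hcl : c (n + 1) = b) (hcl' : c' (n' + 1) = b)
    (h1 : ∀ j, j ≤ n → det2 (c j) (c (j + 1)) = 1)
    (h1' : ∀ j, j ≤ n' → det2 (c' j) (c' (j + 1)) = 1)
    (h2 : ∀ k, 1 ≤ k → k ≤ n → 1 < det2 (c (k - 1)) (c (k + 1)))
    (h2' : ∀ k, 1 ≤ k → k ≤ n' → 1 < det2 (c' (k - 1)) (c' (k + 1))) :
    n = n' ∧ ∀ j, j ≤ n + 1 → c j = c' j :=
  chain_unique_general a b ha n n' c c' hc0 hc0' hcl hcl' h1 h1' h2 h2'
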